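/- arXiv:2112.14387 — 4 statements merged into one kernel-verified Lean document; each statement's English description precedes it below -/
import Mathlib

section
/- Let μ, L, α, Γ be real numbers with 0 < μ ≤ L, α ≥ 1, Γ ≥ 0, set κ = L/μ, and assume ακ ≥ 3/2. Define the diminishing learning rates η_n = 2/(μ(n + 2ακ − 1)) for n ∈ ℕ. If a : ℕ → ℝ is a nonnegative sequence satisfying a_{n+1} ≤ (1 − μ·η_n)·a_n + α·Γ·η_n² for all n ∈ ℕ, then for every N ∈ ℕ it holds that (L/2)·a_N ≤ (α·κ/(N + 2·α·κ − 1))·(L·a_0 + 2·Γ/μ). -/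
/-- Deterministic quantitative core of Theorem 1 (convergence of quantized FEEL). -/
theorem stmt_0 (μ L α Γ : ℝ) (hμ : 0 < μ) (hμL : μ ≤ L) (hα : 1 ≤ α) (hΓ : 0 ≤ Γ)
    (κ : ℝ) (hκ : κ = L / μ) (hακ : 3 / 2 ≤ α * κ)
    (η : ℕ → ℝ) (hη : ∀ n : ℕ, η n = 2 / (μ * ((n : ℝ) + 2 * α * κ - 1)))
    (a : ℕ → ℝ) (ha : ∀ n : ℕ, 0 ≤ a n)
    (hrec : ∀ n : ℕ, a (n + 1) ≤ (1 - μ * η n) * a n + α * Γ * (η n) ^ 2) :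
    ∀ N : ℕ, (L / 2) * a N ≤ (α * κ / ((N : ℝ) + 2 * α * κ - 1)) * (L * a 0 + 2 * Γ / μ) := by
  have hL : 0 < L := lt_of_lt_of_le hμ hμL
  have hκpos : 0 < κ := by rw [hκ]; positivity
  set K : ℝ := 4 * α * Γ / μ ^ 2 with hKdef
  have hK : 0 ≤ K := by positivity
  set ν : ℝ := 2 * α * κ * a 0 + K with hνdef
  have hKν : K ≤ ν := by nlinarith [ha 0, mul_pos (lt_of_lt_of_le one_pos hα) hκpos]
  have hνnn : 0 ≤ ν := le_trans hK hKν
  have key : ∀ N : ℕ, a N * ((N : ℝ) + 2 * α * κ - 1) ≤ ν := by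
    intro N
    induction N with
    | zero =>
      simp only [Nat.cast_zero]
      nlinarith [ha 0]
    | succ n ih =>
      set g : ℝ := (n : ℝ) + 2 * α * κ - 1 with hgdef
      have hg : 2 ≤ g := by
        have : (0:ℝ) ≤ (n:ℝ) := Nat.cast_nonneg n
        simp only [hgdef]; linarith
      have hgpos : 0 < g := by linarith
      have h1 : μ * η n = 2 / g := by
        rw [hη n, ← hgdef, mul_div_assoc']; exact mul_div_mul_left 2 g hμ.ne'
      have h2 : α * Γ * (η n) ^ 2 = K / g ^ 2 := by
        rw [hη n, hKdef, ← hgdef]; ring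
      have step : a (n + 1) ≤ (1 - 2 / g) * a n + K / g ^ 2 := by
        have := hrec n; rw [h1, h2] at this; exact this
      have step2 : a (n + 1) * g ^ 2 ≤ (g - 2) * (a n * g) + K := by
        calc a (n + 1) * g ^ 2 ≤ ((1 - 2 / g) * a n + K / g ^ 2) * g ^ 2 :=
              mul_le_mul_of_nonneg_right step (by positivity)
          _ = (g - 2) * (a n * g) + K := by field_simp
      have step3 : a (n + 1) * g ^ 2 ≤ (g - 2) * ν + K := by
        nlinarith [ih]
      have hcast : ((n + 1 : ℕ) : ℝ) + 2 * α * κ - 1 = g + 1 := by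
        push_cast; simp only [hgdef]; ring
      rw [hcast]
      nlinarith [mul_le_mul_of_nonneg_right step3 (by linarith : (0:ℝ) ≤ g + 1),
        ha (n + 1), mul_pos hgpos hgpos]
  intro N
  have hg : 2 ≤ (N : ℝ) + 2 * α * κ - 1 := by
    have : (0:ℝ) ≤ (N:ℝ) := Nat.cast_nonneg N
    linarith
  have hgpos : 0 < (N : ℝ) + 2 * α * κ - 1 := by linarith
  have heq : α * κ / ((N : ℝ) + 2 * α * κ - 1) * (L * a 0 + 2 * Γ / μ)
      = (α * κ * (L * a 0 + 2 * Γ / μ)) / ((N : ℝ) + 2 * α * κ - 1) := by ring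
  rw [heq, le_div_iff₀ hgpos]
  have h1 : (L / 2) * (a N * ((N : ℝ) + 2 * α * κ - 1)) ≤ (L / 2) * ν :=
    mul_le_mul_of_nonneg_left (key N) (by positivity)
  have h2 : (L / 2) * ν = α * κ * (L * a 0 + 2 * Γ / μ) := by
    rw [hνdef, hKdef, hκ]; field_simp; ring
  calc L / 2 * a N * ((N : ℝ) + 2 * α * κ - 1)
      = (L / 2) * (a N * ((N : ℝ) + 2 * α * κ - 1)) := by ring
    _ ≤ (L / 2) * ν := h1
    _ = α * κ * (L * a 0 + 2 * Γ / μ) := h2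
end

section
/- Let d, K, q be positive integers, H = ℝ^d with the Euclidean inner product, and let F_1, …, F_K : H → ℝ be differentiable functions that are each L-smooth and μ-strongly convex with 0 < μ ≤ L. Set F = (1/K)Σ_k F_k, let w_* be a global minimizer of F, let F_k^* be the infimum of F_k (attained), let F_δ = F(w_*) − (1/K)Σ_k F_k^*, let δ_1, …, δ_K ≥ 0, let α = √d/(qK) + 1, and Γ = 2·L·F_δ + (1/K)Σ_k δ_k². Fix w ∈ H and let g_1, …, g_K, Q_1, …, Q_K : Ω → H be square-integrable random vectors on a probability space such that for all k, j: 𝔼[g_k] = ∇F_k(w), 𝔼‖g_k − ∇F_k(w)‖² ≤ δ_k², 𝔼[Q_k − g_k] = 0, 𝔼‖Q_k − g_k‖² ≤ (√d/q)·𝔼‖g_k‖², 𝔼⟨Q_k − g_k, g_j⟩ = 0, and 𝔼⟨Q_k − g_k, Q_j − g_j⟩ = 0 whenever k ≠ j. Then for any step size η with 0 < η ≤ 1/(α·L), the random vector W⁺ = w − (η/K)·Σ_k Q_k satisfies 𝔼‖W⁺ − w_*‖² ≤ (1 − μ·η)·‖w − w_*‖² + α·Γ·η². -/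
open MeasureTheory
open scoped RealInnerProductSpace

private lemma integrable_inner_of_memL2 {α E : Type*} [MeasurableSpace α] {μ : Measure α}
    [NormedAddCommGroup E] [InnerProductSpace ℝ E] {f g : α → E}
    (hf : MemLp f 2 μ) (hg : MemLp g 2 μ) :
    Integrable (fun x => ⟪f x, g x⟫) μ := by
  have h := L2.integrable_inner (𝕜 := ℝ) (hf.toLp f) (hg.toLp g)
  refine h.congr ?_
  filter_upwards [hf.coeFn_toLp, hg.coeFn_toLp] with x hx hy
  rw [hx, hy]

private lemma integrable_sq_norm_of_memL2 {α E : Type*} [MeasurableSpace α] {μ : Measure α}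
    [NormedAddCommGroup E] {f : α → E} (hf : MemLp f 2 μ) :
    Integrable (fun x => ‖f x‖ ^ 2) μ :=
  (memLp_two_iff_integrable_sq_norm hf.1).mp hf

private lemma norm_sum_sq_le_card {K : ℕ} {E : Type*} [NormedAddCommGroup E] (f : Fin K → E) :
    ‖∑ k, f k‖ ^ 2 ≤ (K : ℝ) * ∑ k, ‖f k‖ ^ 2 := by
  calc ‖∑ k, f k‖ ^ 2 ≤ (∑ k, ‖f k‖) ^ 2 :=
        pow_le_pow_left₀ (norm_nonneg _) (norm_sum_le _ _) 2
    _ ≤ (K : ℝ) * ∑ k, ‖f k‖ ^ 2 := by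
        have := sq_sum_le_card_mul_sum_sq (s := (Finset.univ : Finset (Fin K)))
          (f := fun k => ‖f k‖)
        simpa using this

set_option maxHeartbeats 2000000 in
/-- Lemma 2 (one-step descent inequality for quantized FedSGD). -/
theorem stmt_2
    (d K q : ℕ) (hd : 0 < d) (hK : 0 < K) (hq : 0 < q)
    (L μ : ℝ) (hμ : 0 < μ) (hμL : μ ≤ L)
    (F : Fin K → EuclideanSpace ℝ (Fin d) → ℝ)
    (gradF : Fin K → EuclideanSpace ℝ (Fin d) → EuclideanSpace ℝ (Fin d))
    (hdiff : ∀ k x, HasGradientAt (F k) (gradF k x) x)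
    (hsmooth : ∀ k x y, F k y ≤ F k x + ⟪gradF k x, y - x⟫ + (L / 2) * ‖y - x‖ ^ 2)
    (hconv : ∀ k x y, F k y ≥ F k x + ⟪gradF k x, y - x⟫ + (μ / 2) * ‖y - x‖ ^ 2)
    (wstar : EuclideanSpace ℝ (Fin d))
    (hwstar : ∀ w, (1 / (K : ℝ)) * ∑ k, F k wstar ≤ (1 / (K : ℝ)) * ∑ k, F k w)
    (Fstar : Fin K → ℝ)
    (hFstar_le : ∀ k w, Fstar k ≤ F k w)
    (hFstar_att : ∀ k, ∃ w, F k w = Fstar k)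
    (Fδ : ℝ) (hFδ : Fδ = (1 / (K : ℝ)) * ∑ k, F k wstar - (1 / (K : ℝ)) * ∑ k, Fstar k)
    (δ : Fin K → ℝ) (hδ : ∀ k, 0 ≤ δ k)
    (α : ℝ) (hα : α = Real.sqrt d / ((q : ℝ) * K) + 1)
    (Γ : ℝ) (hΓ : Γ = 2 * L * Fδ + (1 / (K : ℝ)) * ∑ k, (δ k) ^ 2)
    (w : EuclideanSpace ℝ (Fin d))
    (Ω : Type*) [MeasureSpace Ω] [IsProbabilityMeasure (volume : Measure Ω)]
    (g Q : Fin K → Ω → EuclideanSpace ℝ (Fin d))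
    (hgL2 : ∀ k, MemLp (g k) 2 (volume : Measure Ω))
    (hQL2 : ∀ k, MemLp (Q k) 2 (volume : Measure Ω))
    (hg_mean : ∀ k, ∫ ω, g k ω = gradF k w)
    (hg_var : ∀ k, ∫ ω, ‖g k ω - gradF k w‖ ^ 2 ≤ (δ k) ^ 2)
    (hQ_unbiased : ∀ k, ∫ ω, (Q k ω - g k ω) = 0)
    (hQ_var : ∀ k, ∫ ω, ‖Q k ω - g k ω‖ ^ 2 ≤ (Real.sqrt d / q) * ∫ ω, ‖g k ω‖ ^ 2)
    (hQg_orth : ∀ k j, ∫ ω, ⟪Q k ω - g k ω, g j ω⟫ = 0)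
    (hQQ_orth : ∀ k j, k ≠ j → ∫ ω, ⟪Q k ω - g k ω, Q j ω - g j ω⟫ = 0)
    (η : ℝ) (hη_pos : 0 < η) (hη_le : η ≤ 1 / (α * L)) :
    ∫ ω, ‖(w - (η / (K : ℝ)) • ∑ k, Q k ω) - wstar‖ ^ 2
      ≤ (1 - μ * η) * ‖w - wstar‖ ^ 2 + α * Γ * η ^ 2 := by
  have hL : 0 < L := lt_of_lt_of_le hμ hμL
  have hK0 : (0:ℝ) < (K:ℝ) := Nat.cast_pos.mpr hK
  have hq0 : (0:ℝ) < (q:ℝ) := Nat.cast_pos.mpr hq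
  have hsd0 : (0:ℝ) ≤ Real.sqrt d / q := div_nonneg (Real.sqrt_nonneg _) hq0.le
  have hα1 : (1:ℝ) ≤ α := by
    rw [hα]
    have : 0 ≤ Real.sqrt d / ((q:ℝ) * K) :=
      div_nonneg (Real.sqrt_nonneg _) (by positivity)
    linarith
  have hα0 : 0 < α := lt_of_lt_of_le one_pos hα1
  have hαLη : α * L * η ≤ 1 := by
    have hαL : 0 < α * L := mul_pos hα0 hL
    rw [le_div_iff₀ hαL] at hη_le
    linarith [hη_le]
  -- abbreviations
  set G : Fin K → EuclideanSpace ℝ (Fin d) := fun k => gradF k w with hGdef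
  set e : Fin K → Ω → EuclideanSpace ℝ (Fin d) := fun k ω => Q k ω - g k ω with hedef
  set h' : Fin K → Ω → EuclideanSpace ℝ (Fin d) := fun k ω => g k ω - G k with hhdef
  -- integrability basics
  have hgi : ∀ k, Integrable (g k) := fun k => (hgL2 k).integrable one_le_two
  have hQi : ∀ k, Integrable (Q k) := fun k => (hQL2 k).integrable one_le_two
  have heL2 : ∀ k, MemLp (e k) 2 (volume : Measure Ω) := fun k => (hQL2 k).sub (hgL2 k)
  have hhL2 : ∀ k, MemLp (h' k) 2 (volume : Measure Ω) := fun k => (hgL2 k).sub (memLp_const _)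
  have hei : ∀ k, Integrable (e k) := fun k => (heL2 k).integrable one_le_two
  have hhi : ∀ k, Integrable (h' k) := fun k => (hhL2 k).integrable one_le_two
  have hconstint : ∀ c : EuclideanSpace ℝ (Fin d), ∫ _ : Ω, c = c := by
    intro c; rw [integral_const, probReal_univ]; simp
  -- means
  have he_mean : ∀ k, ∫ ω, e k ω = 0 := fun k => hQ_unbiased k
  have hh_mean : ∀ k, ∫ ω, h' k ω = 0 := by
    intro k
    have : ∫ ω, h' k ω = (∫ ω, g k ω) - ∫ _ : Ω, G k := integral_sub (hgi k) (integrable_const _)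
    rw [this, hg_mean k, hconstint]
    simp [hGdef]
  have hQ_mean : ∀ k, ∫ ω, Q k ω = G k := by
    intro k
    have h1 : ∫ ω, e k ω = (∫ ω, Q k ω) - ∫ ω, g k ω := integral_sub (hQi k) (hgi k)
    have h2 := he_mean k
    rw [h1] at h2
    have := sub_eq_zero.mp h2
    rw [this, hg_mean k]
  -- sum processes
  set Hf : Ω → EuclideanSpace ℝ (Fin d) := fun ω => ∑ k, h' k ω with hHfdef
  set Ef : Ω → EuclideanSpace ℝ (Fin d) := fun ω => ∑ k, e k ω with hEfdef
  set Y : Ω → EuclideanSpace ℝ (Fin d) := fun ω => Hf ω + Ef ω with hYdef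
  have hHfL2 : MemLp Hf 2 (volume : Measure Ω) := memLp_finset_sum _ (fun k _ => hhL2 k)
  have hEfL2 : MemLp Ef 2 (volume : Measure Ω) := memLp_finset_sum _ (fun k _ => heL2 k)
  have hYL2 : MemLp Y 2 (volume : Measure Ω) := hHfL2.add hEfL2
  have hHfi : Integrable Hf := hHfL2.integrable one_le_two
  have hEfi : Integrable Ef := hEfL2.integrable one_le_two
  have hYi : Integrable Y := hYL2.integrable one_le_two
  have hHf_mean : ∫ ω, Hf ω = 0 := by
    rw [hHfdef]
    rw [integral_finset_sum _ (fun k _ => hhi k)]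
    simp [hh_mean]
  have hEf_mean : ∫ ω, Ef ω = 0 := by
    rw [hEfdef]
    rw [integral_finset_sum _ (fun k _ => hei k)]
    simp [he_mean]
  have hY_mean : ∫ ω, Y ω = 0 := by
    rw [hYdef]
    rw [integral_add hHfi hEfi, hHf_mean, hEf_mean, add_zero]
  -- constants
  set c : ℝ := η / (K:ℝ) with hcdef
  set a : EuclideanSpace ℝ (Fin d) := w - wstar with hadef
  set G0 : EuclideanSpace ℝ (Fin d) := ∑ k, G k with hG0def
  set b : EuclideanSpace ℝ (Fin d) := a - c • G0 with hbdef
  -- pointwise decomposition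
  have hYpt : ∀ ω, Y ω = (∑ k, Q k ω) - G0 := by
    intro ω
    rw [hYdef, hHfdef, hEfdef, hG0def]
    simp only
    rw [← Finset.sum_add_distrib, ← Finset.sum_sub_distrib]
    refine Finset.sum_congr rfl (fun k _ => ?_)
    simp only [hhdef, hedef]
    abel
  have hXpt : ∀ ω, (w - (η / (K:ℝ)) • ∑ k, Q k ω) - wstar = b - c • Y ω := by
    intro ω
    rw [hYpt ω, hbdef, hadef, smul_sub]
    rw [← hcdef]
    abel
  -- second-moment integrability
  have hY2i : Integrable (fun ω => ‖Y ω‖ ^ 2) := integrable_sq_norm_of_memL2 hYL2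
  have hHf2i : Integrable (fun ω => ‖Hf ω‖ ^ 2) := integrable_sq_norm_of_memL2 hHfL2
  have hEf2i : Integrable (fun ω => ‖Ef ω‖ ^ 2) := integrable_sq_norm_of_memL2 hEfL2
  have hbYi : Integrable (fun ω => ⟪b, Y ω⟫) := hYi.const_inner b
  -- main expansion of the left-hand side
  have hexp : ∫ ω, ‖(w - c • ∑ k, Q k ω) - wstar‖ ^ 2
      = ‖b‖ ^ 2 + c ^ 2 * ∫ ω, ‖Y ω‖ ^ 2 := by
    have hpt : ∀ ω, ‖(w - c • ∑ k, Q k ω) - wstar‖ ^ 2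
        = ‖b‖ ^ 2 - (2 * c) * ⟪b, Y ω⟫ + c ^ 2 * ‖Y ω‖ ^ 2 := by
      intro ω
      rw [hXpt ω, norm_sub_sq_real, inner_smul_right, norm_smul]
      rw [mul_pow, Real.norm_eq_abs, sq_abs]
      ring
    rw [integral_congr_ae (Filter.Eventually.of_forall hpt)]
    have h1 : Integrable (fun ω => ‖b‖ ^ 2 - 2 * c * ⟪b, Y ω⟫) (volume : Measure Ω) :=
      (integrable_const _).sub (hbYi.const_mul _)
    have h2 : Integrable (fun ω => c ^ 2 * ‖Y ω‖ ^ 2) (volume : Measure Ω) :=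
      hY2i.const_mul _
    have h3 : Integrable (fun ω => 2 * c * ⟪b, Y ω⟫) (volume : Measure Ω) :=
      hbYi.const_mul _
    rw [integral_add h1 h2, integral_sub (integrable_const _) h3]
    rw [integral_const, probReal_univ, integral_const_mul, integral_const_mul]
    rw [integral_inner hYi, hY_mean, inner_zero_right]
    simp
  -- cross term between Hf and Ef vanishes
  have hje : ∀ j k, ∫ ω, ⟪h' j ω, e k ω⟫ = 0 := by
    intro j k
    have hsplit : ∀ ω, ⟪h' j ω, e k ω⟫ = ⟪e k ω, g j ω⟫ - ⟪G j, e k ω⟫ := by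
      intro ω
      simp only [hhdef]
      rw [inner_sub_left, real_inner_comm (g j ω) (e k ω)]
    rw [integral_congr_ae (Filter.Eventually.of_forall hsplit)]
    rw [integral_sub (integrable_inner_of_memL2 (heL2 k) (hgL2 j)) ((hei k).const_inner _)]
    rw [integral_inner (hei k), he_mean k, inner_zero_right]
    have h0 : ∫ ω, ⟪e k ω, g j ω⟫ = 0 := hQg_orth k j
    rw [h0, sub_zero]
  have hcross : ∫ ω, ⟪Hf ω, Ef ω⟫ = 0 := by
    have hpt : ∀ ω, ⟪Hf ω, Ef ω⟫ = ∑ j, ∑ k, ⟪h' j ω, e k ω⟫ := by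
      intro ω
      simp only [hHfdef, hEfdef]
      rw [sum_inner]
      exact Finset.sum_congr rfl fun j _ => inner_sum _ _ _
    rw [integral_congr_ae (Filter.Eventually.of_forall hpt)]
    rw [integral_finset_sum _ (fun j _ =>
      integrable_finset_sum _ (fun k _ => integrable_inner_of_memL2 (hhL2 j) (heL2 k)))]
    refine Finset.sum_eq_zero fun j _ => ?_
    rw [integral_finset_sum _ (fun k _ => integrable_inner_of_memL2 (hhL2 j) (heL2 k))]
    exact Finset.sum_eq_zero fun k _ => hje j k
  -- second moment of Y
  have hY2 : ∫ ω, ‖Y ω‖ ^ 2 = (∫ ω, ‖Hf ω‖ ^ 2) + ∫ ω, ‖Ef ω‖ ^ 2 := by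
    have hpt : ∀ ω, ‖Y ω‖ ^ 2 = ‖Hf ω‖ ^ 2 + 2 * ⟪Hf ω, Ef ω⟫ + ‖Ef ω‖ ^ 2 := by
      intro ω
      rw [hYdef]
      exact norm_add_sq_real _ _
    rw [integral_congr_ae (Filter.Eventually.of_forall hpt)]
    have hHEi : Integrable (fun ω => ⟪Hf ω, Ef ω⟫) (volume : Measure Ω) :=
      integrable_inner_of_memL2 hHfL2 hEfL2
    have h1 : Integrable (fun ω => ‖Hf ω‖ ^ 2 + 2 * ⟪Hf ω, Ef ω⟫) (volume : Measure Ω) :=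
      hHf2i.add (hHEi.const_mul _)
    rw [integral_add h1 hEf2i, integral_add hHf2i (hHEi.const_mul _)]
    rw [integral_const_mul, hcross]
    ring
  -- second moment of Ef
  have hEf2 : ∫ ω, ‖Ef ω‖ ^ 2 = ∑ k, ∫ ω, ‖e k ω‖ ^ 2 := by
    have hpt : ∀ ω, ‖Ef ω‖ ^ 2 = ∑ j, ∑ k, ⟪e j ω, e k ω⟫ := by
      intro ω
      rw [← real_inner_self_eq_norm_sq]
      simp only [hEfdef]
      rw [sum_inner]
      exact Finset.sum_congr rfl fun j _ => inner_sum _ _ _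
    rw [integral_congr_ae (Filter.Eventually.of_forall hpt)]
    rw [integral_finset_sum _ (fun j _ =>
      integrable_finset_sum _ (fun k _ => integrable_inner_of_memL2 (heL2 j) (heL2 k)))]
    refine Finset.sum_congr rfl fun j _ => ?_
    rw [integral_finset_sum _ (fun k _ => integrable_inner_of_memL2 (heL2 j) (heL2 k))]
    rw [Finset.sum_eq_single j]
    · apply integral_congr_ae (Filter.Eventually.of_forall fun ω => ?_)
      exact real_inner_self_eq_norm_sq _
    · intro k _ hkj
      exact hQQ_orth j k (Ne.symm hkj)
    · intro h; exact absurd (Finset.mem_univ j) h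
  -- per-device second moment facts
  have h'2i : ∀ k, Integrable (fun ω => ‖h' k ω‖ ^ 2) (volume : Measure Ω) :=
    fun k => integrable_sq_norm_of_memL2 (hhL2 k)
  have hvar : ∀ k, ∫ ω, ‖h' k ω‖ ^ 2 ≤ (δ k) ^ 2 := fun k => hg_var k
  have hg2 : ∀ k, ∫ ω, ‖g k ω‖ ^ 2 ≤ ‖G k‖ ^ 2 + (δ k) ^ 2 := by
    intro k
    have hpt : ∀ ω, ‖g k ω‖ ^ 2 = ‖G k‖ ^ 2 + 2 * ⟪G k, h' k ω⟫ + ‖h' k ω‖ ^ 2 := by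
      intro ω
      have hg : G k + h' k ω = g k ω := by simp only [hhdef]; abel
      rw [← hg, norm_add_sq_real]
    have hIi : Integrable (fun ω => ⟪G k, h' k ω⟫) (volume : Measure Ω) :=
      (hhi k).const_inner _
    have heq : ∫ ω, ‖g k ω‖ ^ 2 = ‖G k‖ ^ 2 + ∫ ω, ‖h' k ω‖ ^ 2 := by
      rw [integral_congr_ae (Filter.Eventually.of_forall hpt)]
      have hA : Integrable (fun ω => ‖G k‖ ^ 2 + 2 * ⟪G k, h' k ω⟫) (volume : Measure Ω) :=
        (integrable_const _).add (hIi.const_mul _)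
      rw [integral_add hA (h'2i k), integral_add (integrable_const _) (hIi.const_mul _)]
      rw [integral_const, probReal_univ, integral_const_mul, integral_inner (hhi k),
        hh_mean k, inner_zero_right]
      simp
    rw [heq]
    linarith [hvar k]
  have he2 : ∀ k, ∫ ω, ‖e k ω‖ ^ 2 ≤ (Real.sqrt d / q) * (‖G k‖ ^ 2 + (δ k) ^ 2) := by
    intro k
    have h1 : ∫ ω, ‖e k ω‖ ^ 2 ≤ (Real.sqrt d / q) * ∫ ω, ‖g k ω‖ ^ 2 := hQ_var k
    exact h1.trans (mul_le_mul_of_nonneg_left (hg2 k) hsd0)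
  -- bounds on the two variance terms
  have hHf2le : ∫ ω, ‖Hf ω‖ ^ 2 ≤ (K : ℝ) * ∑ k, (δ k) ^ 2 := by
    have hptle : ∀ ω, ‖Hf ω‖ ^ 2 ≤ (K : ℝ) * ∑ k, ‖h' k ω‖ ^ 2 :=
      fun ω => norm_sum_sq_le_card _
    have hsum2i : Integrable (fun ω => ∑ k, ‖h' k ω‖ ^ 2) (volume : Measure Ω) :=
      integrable_finset_sum _ (fun k _ => h'2i k)
    have step1 : ∫ ω, ‖Hf ω‖ ^ 2 ≤ ∫ ω, (K : ℝ) * ∑ k, ‖h' k ω‖ ^ 2 :=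
      integral_mono hHf2i (hsum2i.const_mul _) hptle
    rw [integral_const_mul, integral_finset_sum _ (fun k _ => h'2i k)] at step1
    refine step1.trans (mul_le_mul_of_nonneg_left ?_ hK0.le)
    exact Finset.sum_le_sum fun k _ => hvar k
  have hEf2le : ∫ ω, ‖Ef ω‖ ^ 2
      ≤ (Real.sqrt d / q) * ((∑ k, ‖G k‖ ^ 2) + ∑ k, (δ k) ^ 2) := by
    rw [hEf2]
    calc ∑ k, ∫ ω, ‖e k ω‖ ^ 2
        ≤ ∑ k, (Real.sqrt d / q) * (‖G k‖ ^ 2 + (δ k) ^ 2) :=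
          Finset.sum_le_sum fun k _ => he2 k
      _ = (Real.sqrt d / q) * ((∑ k, ‖G k‖ ^ 2) + ∑ k, (δ k) ^ 2) := by
          rw [← Finset.mul_sum, Finset.sum_add_distrib]
  -- deterministic facts
  have e1 : ‖b‖ ^ 2 = ‖a‖ ^ 2 - 2 * c * ⟪G0, a⟫ + c ^ 2 * ‖G0‖ ^ 2 := by
    rw [hbdef, norm_sub_sq_real, inner_smul_right, norm_smul, Real.norm_eq_abs,
      real_inner_comm a G0, mul_pow, sq_abs]
    ring
  have hG02 : ‖G0‖ ^ 2 ≤ (K : ℝ) * ∑ k, ‖G k‖ ^ 2 := by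
    rw [hG0def]; exact norm_sum_sq_le_card G
  -- strong convexity
  have hper : ∀ k, F k w - F k wstar + (μ / 2) * ‖a‖ ^ 2 ≤ ⟪G k, a⟫ := by
    intro k
    simp only [hGdef, hadef]
    have h := hconv k w wstar
    have h1 : wstar - w = -(w - wstar) := (neg_sub w wstar).symm
    rw [h1, inner_neg_right, norm_neg] at h
    linarith [h]
  have hstrong : (∑ k, F k w) - (∑ k, F k wstar) + (K : ℝ) * ((μ / 2) * ‖a‖ ^ 2)
      ≤ ⟪G0, a⟫ := by
    have hsum : ∑ k, (F k w - F k wstar + (μ / 2) * ‖a‖ ^ 2) ≤ ∑ k, ⟪G k, a⟫ :=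
      Finset.sum_le_sum fun k _ => hper k
    have hG0a : ⟪G0, a⟫ = ∑ k, ⟪G k, a⟫ := by rw [hG0def, sum_inner]
    rw [hG0a]
    refine le_trans (le_of_eq ?_) hsum
    rw [Finset.sum_add_distrib, Finset.sum_sub_distrib, Finset.sum_const,
      Finset.card_univ, Fintype.card_fin, nsmul_eq_mul]
  -- smoothness bound on gradient norms
  have hsg : ∀ k, ‖G k‖ ^ 2 ≤ 2 * L * (F k w - Fstar k) := by
    intro k
    simp only [hGdef]
    have h := hsmooth k w (w - L⁻¹ • gradF k w)
    have h2 := hFstar_le k (w - L⁻¹ • gradF k w)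
    have eo : (w - L⁻¹ • gradF k w) - w = -(L⁻¹ • gradF k w) := by abel
    rw [eo, inner_neg_right, real_inner_smul_right, real_inner_self_eq_norm_sq, norm_neg,
      norm_smul, Real.norm_eq_abs, abs_of_pos (inv_pos.mpr hL)] at h
    have hL' : L⁻¹ * L = 1 := inv_mul_cancel₀ hL.ne'
    have h4 : F k w + -(L⁻¹ * ‖gradF k w‖ ^ 2) + L / 2 * (L⁻¹ * ‖gradF k w‖) ^ 2
        = F k w - (L⁻¹ / 2) * ‖gradF k w‖ ^ 2 := by
      have hh : L / 2 * (L⁻¹ * ‖gradF k w‖) ^ 2 = (L⁻¹ * L) * (L⁻¹ * ‖gradF k w‖ ^ 2 / 2) := by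
        ring
      rw [hh, hL']; ring
    have h3 : (L⁻¹ / 2) * ‖gradF k w‖ ^ 2 ≤ F k w - Fstar k := by
      have := h2.trans h
      rw [h4] at this
      linarith
    have h5 := mul_le_mul_of_nonneg_left h3 (show (0:ℝ) ≤ 2 * L by positivity)
    have h6 : 2 * L * ((L⁻¹ / 2) * ‖gradF k w‖ ^ 2) = (L⁻¹ * L) * ‖gradF k w‖ ^ 2 := by ring
    rw [h6, hL', one_mul] at h5
    exact h5
  have hSg : ∑ k, ‖G k‖ ^ 2 ≤ 2 * L * ((∑ k, F k w) - ∑ k, Fstar k) := by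
    calc ∑ k, ‖G k‖ ^ 2 ≤ ∑ k, 2 * L * (F k w - Fstar k) :=
          Finset.sum_le_sum fun k _ => hsg k
      _ = 2 * L * ((∑ k, F k w) - ∑ k, Fstar k) := by
          rw [← Finset.mul_sum, Finset.sum_sub_distrib]
  have hPw : (∑ k, F k wstar) ≤ ∑ k, F k w := by
    have h := hwstar w
    have h1K : (0:ℝ) < 1 / (K : ℝ) := by positivity
    exact le_of_mul_le_mul_left (by simpa using h) h1K
  have hKFδ : (K : ℝ) * Fδ = (∑ k, F k wstar) - ∑ k, Fstar k := by
    rw [hFδ]; field_simp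
  have hαid : c ^ 2 * ((K : ℝ) + Real.sqrt d / q) = α * η ^ 2 / K := by
    rw [hcdef, hα]; field_simp; ring
  -- final assembly
  rw [hexp, hY2]
  have hc0 : 0 < c := by rw [hcdef]; positivity
  have hco : 0 ≤ α * η ^ 2 / (K : ℝ) := by positivity
  calc ‖b‖ ^ 2 + c ^ 2 * ((∫ ω, ‖Hf ω‖ ^ 2) + ∫ ω, ‖Ef ω‖ ^ 2)
      ≤ ‖b‖ ^ 2 + c ^ 2 * (((K : ℝ) * ∑ k, (δ k) ^ 2)
          + (Real.sqrt d / q) * ((∑ k, ‖G k‖ ^ 2) + ∑ k, (δ k) ^ 2)) :=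
        add_le_add_right
          (mul_le_mul_of_nonneg_left (add_le_add hHf2le hEf2le) (sq_nonneg c)) _
    _ = ‖a‖ ^ 2 - 2 * c * ⟪G0, a⟫ + c ^ 2 * ‖G0‖ ^ 2
          + c ^ 2 * ((K : ℝ) * ∑ k, (δ k) ^ 2 + (Real.sqrt d / q) * ∑ k, ‖G k‖ ^ 2
            + (Real.sqrt d / q) * ∑ k, (δ k) ^ 2) := by
        rw [e1]; ring
    _ ≤ ‖a‖ ^ 2 - 2 * c * ⟪G0, a⟫ + c ^ 2 * ((K : ℝ) * ∑ k, ‖G k‖ ^ 2)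
          + c ^ 2 * ((K : ℝ) * ∑ k, (δ k) ^ 2 + (Real.sqrt d / q) * ∑ k, ‖G k‖ ^ 2
            + (Real.sqrt d / q) * ∑ k, (δ k) ^ 2) := by
        have := mul_le_mul_of_nonneg_left hG02 (sq_nonneg c)
        linarith
    _ = ‖a‖ ^ 2 - 2 * c * ⟪G0, a⟫
          + (c ^ 2 * ((K : ℝ) + Real.sqrt d / q))
            * ((∑ k, ‖G k‖ ^ 2) + ∑ k, (δ k) ^ 2) := by ring
    _ = ‖a‖ ^ 2 - 2 * c * ⟪G0, a⟫
          + (α * η ^ 2 / K) * ((∑ k, ‖G k‖ ^ 2) + ∑ k, (δ k) ^ 2) := by rw [hαid]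
    _ ≤ ‖a‖ ^ 2 - 2 * c * (((∑ k, F k w) - ∑ k, F k wstar)
            + (K : ℝ) * ((μ / 2) * ‖a‖ ^ 2))
          + (α * η ^ 2 / K) * ((∑ k, ‖G k‖ ^ 2) + ∑ k, (δ k) ^ 2) := by
        have := mul_le_mul_of_nonneg_left hstrong (by positivity : (0:ℝ) ≤ 2 * c)
        linarith
    _ ≤ ‖a‖ ^ 2 - 2 * c * (((∑ k, F k w) - ∑ k, F k wstar)
            + (K : ℝ) * ((μ / 2) * ‖a‖ ^ 2))
          + (α * η ^ 2 / K) * (2 * L * ((∑ k, F k w) - ∑ k, Fstar k)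
            + ∑ k, (δ k) ^ 2) := by
        have := mul_le_mul_of_nonneg_left (add_le_add_right hSg (∑ k, (δ k) ^ 2)) hco
        linarith
    _ ≤ (1 - μ * η) * ‖a‖ ^ 2 + α * Γ * η ^ 2 := by
        have hc2 : 2 * c * (((∑ k, F k w) - ∑ k, F k wstar)
              + (K : ℝ) * ((μ / 2) * ‖a‖ ^ 2))
            = 2 * c * ((∑ k, F k w) - ∑ k, F k wstar) + μ * η * ‖a‖ ^ 2 := by
          rw [hcdef]; field_simp
        have hsplit : (α * η ^ 2 / K) * (2 * L * ((∑ k, F k w) - ∑ k, Fstar k)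
              + ∑ k, (δ k) ^ 2)
            = (2 * α * L * η ^ 2 / K) * ((∑ k, F k w) - ∑ k, F k wstar)
              + (2 * α * L * η ^ 2 / K) * ((∑ k, F k wstar) - ∑ k, Fstar k)
              + (α * η ^ 2 / K) * ∑ k, (δ k) ^ 2 := by ring
        have hPPW : (0:ℝ) ≤ (∑ k, F k w) - ∑ k, F k wstar := by linarith
        have hb1 : 2 * α * L * η ^ 2 / (K : ℝ) = (2 * c) * (α * L * η) := by
          rw [hcdef]; field_simp
        have hb2 : (2 * c) * (α * L * η) ≤ (2 * c) * 1 :=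
          mul_le_mul_of_nonneg_left hαLη (by positivity)
        have h11 : (2 * α * L * η ^ 2 / (K : ℝ)) * ((∑ k, F k w) - ∑ k, F k wstar)
            ≤ (2 * c) * ((∑ k, F k w) - ∑ k, F k wstar) := by
          rw [hb1]
          exact mul_le_mul_of_nonneg_right (by linarith [hb2]) hPPW
        have hΓ' : α * Γ * η ^ 2
            = (2 * α * L * η ^ 2 / K) * ((∑ k, F k wstar) - ∑ k, Fstar k)
              + (α * η ^ 2 / K) * ∑ k, (δ k) ^ 2 := by
          rw [hΓ, ← hKFδ]
          field_simp
        linarith [h11, hc2, hsplit, hΓ']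
end

section
/- Let b, p, N₀, φ be positive real numbers and set θ = N₀/(p·φ). Then ∫₀^∞ b·log₂(1 + p·x/(b·N₀))·(1/φ)·e^{−x/φ} dx = (b/ln 2)·e^{b·θ}·∫_{b·θ}^∞ (e^{−t}/t) dt. -/
open MeasureTheory Real Filter Set

/-- Translation: ∫ x in Ioi 0, exp(-x)/(c+x) = exp c * ∫ t in Ioi c, exp(-t)/t. -/
lemma aux_translate (c : ℝ) :
    (∫ x in Set.Ioi (0 : ℝ), Real.exp (-x) / (c + x))
      = Real.exp c * ∫ t in Set.Ioi c, Real.exp (-t) / t := by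
  have hmp : MeasurePreserving (fun x : ℝ => x + c) volume volume :=
    measurePreserving_add_right volume c
  have hemb : MeasurableEmbedding (fun x : ℝ => x + c) :=
    (MeasurableEquiv.addRight c).measurableEmbedding
  have hpre : (fun x : ℝ => x + c) ⁻¹' Set.Ioi c = Set.Ioi 0 := by
    ext x; simp
  have := hmp.setIntegral_preimage_emb hemb (fun t => Real.exp (-t) / t) (Set.Ioi c)
  rw [hpre] at this
  rw [← this, ← integral_const_mul]
  refine setIntegral_congr_fun measurableSet_Ioi (fun x hx => ?_)
  rw [← mul_div_assoc, ← Real.exp_add, show c + -(x + c) = -x by ring, add_comm c x]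

/-- Core: for c > 0, ∫ u in Ioi 0, log(1+u/c) e^{-u} du = e^c ∫_c^∞ e^{-t}/t dt. -/
lemma aux_core {c : ℝ} (hc : 0 < c) :
    (∫ u in Set.Ioi (0 : ℝ), Real.log (1 + u / c) * Real.exp (-u))
      = Real.exp c * ∫ t in Set.Ioi c, Real.exp (-t) / t := by
  set u : ℝ → ℝ := fun x => Real.log (1 + x / c) with hu_def
  set u' : ℝ → ℝ := fun x => 1 / (c + x) with hu'_def
  set v : ℝ → ℝ := fun x => -Real.exp (-x) with hv_def
  set v' : ℝ → ℝ := fun x => Real.exp (-x) with hv'_def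
  have hpos : ∀ x ∈ Set.Ioi (0 : ℝ), 0 < 1 + x / c := fun x hx => by
    have : 0 < x / c := div_pos hx hc
    linarith
  have hu : ∀ x ∈ Set.Ioi (0 : ℝ), HasDerivAt u (u' x) x := by
    intro x hx
    have h1 : HasDerivAt (fun x : ℝ => 1 + x / c) (1 / c) x := by
      simpa using (hasDerivAt_id x).div_const c |>.const_add 1
    have := (h1.log (ne_of_gt (hpos x hx)))
    convert this using 1
    have hx0 : (0:ℝ) < x := hx
    have hcx : c + x ≠ 0 := by positivity
    rw [hu'_def]
    field_simp
  have hv : ∀ x ∈ Set.Ioi (0 : ℝ), HasDerivAt v (v' x) x := by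
    intro x _
    have : HasDerivAt (fun x : ℝ => Real.exp (-x)) (-Real.exp (-x)) x := by
      simpa [Function.comp_def] using (Real.hasDerivAt_exp (-x)).comp x (hasDerivAt_neg x)
    have h2 := this.neg
    simp only [neg_neg] at h2
    rw [hv_def, hv'_def]
    exact h2
  -- integrability of u * v'
  have hx_exp : IntegrableOn (fun x : ℝ => Real.exp (-x) * x) (Set.Ioi 0) := by
    have := Real.GammaIntegral_convergent (s := 2) (by norm_num)
    simpa [show (2:ℝ) - 1 = 1 by norm_num, Real.rpow_one] using this
  have hmeas_uv' : AEStronglyMeasurable (fun x => u x * v' x)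
      (volume.restrict (Set.Ioi (0:ℝ))) := by
    apply AEStronglyMeasurable.mul
    · exact ((measurable_id.div_const c).const_add 1).log.aestronglyMeasurable
    · exact (measurable_id.neg.exp).aestronglyMeasurable
  have huv' : IntegrableOn (fun x => u x * v' x) (Set.Ioi 0) := by
    refine Integrable.mono' (hx_exp.div_const c) hmeas_uv' ?_
    filter_upwards [ae_restrict_mem measurableSet_Ioi] with x hx
    have hx0 : (0:ℝ) < x := hx
    have h1 : |u x| ≤ x / c := by
      rw [abs_of_nonneg (Real.log_nonneg (by nlinarith [div_pos hx0 hc]))]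
      calc Real.log (1 + x / c) ≤ (1 + x / c) - 1 :=
            Real.log_le_sub_one_of_pos (hpos x hx)
        _ = x / c := by ring
    have : ‖u x * v' x‖ = |u x| * Real.exp (-x) := by
      simp [hv'_def, abs_mul, abs_of_pos (Real.exp_pos (-x))]
    rw [this]
    calc |u x| * Real.exp (-x) ≤ (x / c) * Real.exp (-x) := by
          exact mul_le_mul_of_nonneg_right h1 (Real.exp_pos _).le
      _ = Real.exp (-x) * x / c := by ring
  -- integrability of u' * v
  have hu'v : IntegrableOn (fun x => u' x * v x) (Set.Ioi 0) := by
    have hexp : IntegrableOn (fun x : ℝ => Real.exp (-x)) (Set.Ioi 0) := by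
      simpa using exp_neg_integrableOn_Ioi 0 (by norm_num : (0:ℝ) < 1)
    refine Integrable.mono' (hexp.div_const c) ?_ ?_
    · apply AEStronglyMeasurable.mul
      · exact (measurable_const.div (measurable_const.add measurable_id)).aestronglyMeasurable
      · exact (measurable_id.neg.exp).neg.aestronglyMeasurable
    · filter_upwards [ae_restrict_mem measurableSet_Ioi] with x hx
      have hx0 : (0:ℝ) < x := hx
      have hcx : 0 < c + x := by linarith
      have : ‖u' x * v x‖ = (1 / (c + x)) * Real.exp (-x) := by
        simp [hu'_def, hv_def, abs_mul, abs_of_pos hcx,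
          abs_of_pos (Real.exp_pos (-x))]
      rw [this]
      have h1 : 1 / (c + x) ≤ 1 / c := by
        apply one_div_le_one_div_of_le hc; linarith
      calc (1 / (c + x)) * Real.exp (-x) ≤ (1 / c) * Real.exp (-x) :=
            mul_le_mul_of_nonneg_right h1 (Real.exp_pos _).le
        _ = Real.exp (-x) / c := by ring
  -- limits
  have h_zero : Tendsto (u * v) (nhdsWithin 0 (Set.Ioi 0)) (nhds 0) := by
    have hcont : ContinuousAt (fun x => u x * v x) 0 := by
      apply ContinuousAt.mul
      · exact ContinuousAt.log (by fun_prop) (by simp)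
      · fun_prop
    have h0 : u 0 * v 0 = 0 := by simp [hu_def, hv_def]
    have := hcont.continuousWithinAt (s := Set.Ioi 0)
    simpa [ContinuousWithinAt, Pi.mul_def, h0] using this
  have h_infty : Tendsto (u * v) atTop (nhds 0) := by
    have hbound : Tendsto (fun x : ℝ => x / c * Real.exp (-x)) atTop (nhds 0) := by
      have := (Real.tendsto_pow_mul_exp_neg_atTop_nhds_zero 1).div_const c
      simpa [mul_comm, mul_div_assoc, div_mul_eq_mul_div] using this
    refine squeeze_zero_norm' ?_ hbound
    filter_upwards [eventually_gt_atTop (0:ℝ)] with x hx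
    have h1 : |u x| ≤ x / c := by
      rw [abs_of_nonneg (Real.log_nonneg (by nlinarith [div_pos hx hc]))]
      calc Real.log (1 + x / c) ≤ (1 + x / c) - 1 :=
            Real.log_le_sub_one_of_pos (hpos x hx)
        _ = x / c := by ring
    have : ‖(u * v) x‖ = |u x| * Real.exp (-x) := by
      simp [Pi.mul_apply, hv_def, abs_mul, abs_of_pos (Real.exp_pos (-x))]
    rw [this]
    exact mul_le_mul_of_nonneg_right h1 (Real.exp_pos _).le
  have hibp := integral_Ioi_mul_deriv_eq_deriv_mul hu hv huv' hu'v h_zero h_infty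
  rw [← aux_translate c]
  have : (∫ x in Set.Ioi (0:ℝ), u' x * v x)
      = -∫ x in Set.Ioi (0:ℝ), Real.exp (-x) / (c + x) := by
    rw [← integral_neg]
    refine setIntegral_congr_fun measurableSet_Ioi (fun x _ => ?_)
    simp [hu'_def, hv_def]
    ring
  rw [this] at hibp
  simpa [hu_def, hv'_def] using hibp

/-- Closed-form ergodic capacity (equation (25)) of a fast Rayleigh fading channel. -/
theorem stmt_7
    (b p N₀ φ : ℝ) (hb : 0 < b) (hp : 0 < p) (hN₀ : 0 < N₀) (hφ : 0 < φ)
    (θ : ℝ) (hθ : θ = N₀ / (p * φ)) :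
    ∫ x in Set.Ioi (0 : ℝ), b * Real.logb 2 (1 + p * x / (b * N₀)) * (1 / φ) * Real.exp (-x / φ)
      = (b / Real.log 2) * Real.exp (b * θ) * ∫ t in Set.Ioi (b * θ), Real.exp (-t) / t := by
  have hc : 0 < b * θ := by rw [hθ]; positivity
  set c := b * θ with hc_def
  have hcval : c = b * N₀ / (p * φ) := by rw [hc_def, hθ]; ring
  -- rewrite LHS integrand as constant times g(x) where g(x) = log(1 + x/(cφ)) exp(-x/φ)
  have step1 : (∫ x in Set.Ioi (0 : ℝ),
        b * Real.logb 2 (1 + p * x / (b * N₀)) * (1 / φ) * Real.exp (-x / φ))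
      = (b / (Real.log 2 * φ)) *
        ∫ x in Set.Ioi (0 : ℝ), Real.log (1 + (x / φ) / c) * Real.exp (-(x / φ)) := by
    rw [← integral_const_mul]
    refine setIntegral_congr_fun measurableSet_Ioi (fun x hx => ?_)
    have hx0 : (0:ℝ) < x := hx
    have harg : 1 + p * x / (b * N₀) = 1 + (x / φ) / c := by
      rw [hcval]
      field_simp
    rw [Real.logb, harg, neg_div]
    field_simp
  rw [step1]
  -- substitution x = φ u
  have step2 : (∫ x in Set.Ioi (0 : ℝ), Real.log (1 + (x / φ) / c) * Real.exp (-(x / φ)))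
      = φ * ∫ u in Set.Ioi (0 : ℝ), Real.log (1 + u / c) * Real.exp (-u) := by
    have := integral_comp_mul_left_Ioi
      (fun y => Real.log (1 + y / c) * Real.exp (-y)) 0 (inv_pos.mpr hφ)
    simp only [mul_zero] at this
    have heq : ∀ x : ℝ, Real.log (1 + (x / φ) / c) * Real.exp (-(x / φ))
        = (fun y => Real.log (1 + y / c) * Real.exp (-y)) (φ⁻¹ * x) := by
      intro x; simp [div_eq_inv_mul]
    simp_rw [heq]
    rw [this, inv_inv, smul_eq_mul]
  rw [step2, aux_core hc]
  field_simp
end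

section
/- Let K be a positive integer, t_1, …, t_K ≥ 0, S > 0, B₀ > 0, and for each k let R_k : (0, ∞) → (0, ∞) be continuous and strictly increasing with R_k(b) → 0 as b → 0⁺ and R_k(b) → ∞ as b → ∞. Then there exist a unique real number T with T > max_k t_k and unique positive reals b_1, …, b_K such that t_k + S/R_k(b_k) = T for every k and Σ_{k=1}^K b_k = B₀. -/
open Filter

/-- Correctness of the two-layer bisection search (Algorithm 1): the per-round
deadline T and the bandwidth allocation satisfying the equality latency
constraints and the total bandwidth budget exist and are unique. -/
theorem stmt_15
    (K : ℕ) (hK : 0 < K) (t : Fin K → ℝ) (ht : ∀ k, 0 ≤ t k)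
    (S B₀ : ℝ) (hS : 0 < S) (hB₀ : 0 < B₀)
    (R : Fin K → ℝ → ℝ)
    (hRpos : ∀ k, ∀ b > (0 : ℝ), 0 < R k b)
    (hRcont : ∀ k, ContinuousOn (R k) (Set.Ioi 0))
    (hRmono : ∀ k, StrictMonoOn (R k) (Set.Ioi 0))
    (hR0 : ∀ k, Tendsto (R k) (nhdsWithin 0 (Set.Ioi 0)) (nhds 0))
    (hRtop : ∀ k, Tendsto (R k) atTop atTop) :
    ∃! p : ℝ × (Fin K → ℝ),
      (∀ k, t k < p.1) ∧ (∀ k, 0 < p.2 k) ∧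
      (∀ k, t k + S / R k (p.2 k) = p.1) ∧ (∑ k, p.2 k = B₀) := by
  have hne : (Finset.univ : Finset (Fin K)).Nonempty := ⟨⟨0, hK⟩, Finset.mem_univ _⟩
  -- surjectivity of each R k onto (0,∞)
  have hsurj : ∀ k, ∀ y : ℝ, 0 < y → ∃ b ∈ Set.Ioi (0:ℝ), R k b = y := by
    intro k y hy
    have h1 : ∀ᶠ b in nhdsWithin 0 (Set.Ioi 0), R k b < y :=
      (hR0 k).eventually (gt_mem_nhds hy)
    obtain ⟨b₀, hb₀lt, hb₀pos⟩ := (h1.and eventually_mem_nhdsWithin).exists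
    obtain ⟨b₁, hb₁gt, hb₀₁⟩ :=
      (((hRtop k).eventually_gt_atTop y).and (eventually_ge_atTop b₀)).exists
    have hIcc : Set.Icc b₀ b₁ ⊆ Set.Ioi 0 := fun x hx => lt_of_lt_of_le hb₀pos hx.1
    obtain ⟨c, hc, hcy⟩ := intermediate_value_Icc hb₀₁ ((hRcont k).mono hIcc)
      ⟨le_of_lt hb₀lt, le_of_lt hb₁gt⟩
    exact ⟨c, hIcc hc, hcy⟩
  set g : Fin K → ℝ → ℝ := fun k => Function.invFunOn (R k) (Set.Ioi 0) with hgdef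
  have hgmem : ∀ k (y : ℝ), 0 < y → 0 < g k y := fun k y hy =>
    Function.invFunOn_mem (hsurj k y hy)
  have hgval : ∀ k (y : ℝ), 0 < y → R k (g k y) = y := fun k y hy =>
    Function.invFunOn_eq (hsurj k y hy)
  have hgleft : ∀ k (b : ℝ), 0 < b → g k (R k b) = b := fun k b hb =>
    (hRmono k).injOn.leftInvOn_invFunOn hb
  have hgmono : ∀ k, StrictMonoOn (g k) (Set.Ioi 0) := by
    intro k y1 hy1 y2 hy2 h12
    by_contra h
    push_neg at h
    have h2 : R k (g k y2) ≤ R k (g k y1) :=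
      (hRmono k).monotoneOn (hgmem k y2 hy2) (hgmem k y1 hy1) h
    rw [hgval k y1 hy1, hgval k y2 hy2] at h2
    exact absurd h12 (not_lt.mpr h2)
  have hgcont : ∀ k, ∀ y : ℝ, 0 < y → ContinuousAt (g k) y := by
    intro k y hy
    have hsub : Set.Ioi (0:ℝ) ⊆ g k '' Set.Ioi 0 := fun b hb =>
      ⟨R k b, hRpos k b hb, hgleft k b hb⟩
    exact continuousAt_of_monotoneOn_of_image_mem_nhds ((hgmono k).monotoneOn)
      (isOpen_Ioi.mem_nhds hy)
      (Filter.mem_of_superset (isOpen_Ioi.mem_nhds (hgmem k y hy)) hsub)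
  set tmax := Finset.univ.sup' hne t with htmaxdef
  have htle : ∀ k, t k ≤ tmax := fun k => Finset.le_sup' t (Finset.mem_univ k)
  obtain ⟨k₀, -, hk₀⟩ := Finset.exists_mem_eq_sup' hne t
  set bfun : ℝ → Fin K → ℝ := fun T k => g k (S / (T - t k)) with hbfundef
  set F : ℝ → ℝ := fun T => ∑ k, bfun T k with hFdef
  have hden : ∀ T, tmax < T → ∀ k, 0 < S / (T - t k) := fun T hT k =>
    div_pos hS (by linarith [htle k])
  have hbpos : ∀ T, tmax < T → ∀ k, 0 < bfun T k := fun T hT k => hgmem k _ (hden T hT k)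
  have hbeq : ∀ T, tmax < T → ∀ k, t k + S / R k (bfun T k) = T := by
    intro T hT k
    have hTk : (0:ℝ) < T - t k := by linarith [htle k]
    have : S / (S / (T - t k)) = T - t k := by
      field_simp
    rw [hbfundef]
    simp only
    rw [hgval k _ (hden T hT k), this]
    ring
  have hFanti : StrictAntiOn F (Set.Ioi tmax) := by
    intro T1 h1 T2 h2 h12
    simp only [Set.mem_Ioi] at h1 h2
    apply Finset.sum_lt_sum_of_nonempty hne
    intro k _
    exact hgmono k (Set.mem_Ioi.mpr (hden T2 h2 k)) (Set.mem_Ioi.mpr (hden T1 h1 k))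
      (div_lt_div_of_pos_left hS (by linarith [htle k]) (by linarith))
  have hFcontAt : ∀ T, tmax < T → ContinuousAt F T := by
    intro T hT
    have hterm : ∀ k : Fin K, ContinuousAt (fun T => bfun T k) T := by
      intro k
      have h1 : ContinuousAt (fun T : ℝ => S / (T - t k)) T := by
        apply ContinuousAt.div continuousAt_const (by fun_prop)
        have := htle k; intro h; linarith [sub_eq_zero.mp h]
      show ContinuousAt ((g k) ∘ fun T : ℝ => S / (T - t k)) T
      exact ContinuousAt.comp (x := T) (hgcont k _ (hden T hT k)) h1
    exact tendsto_finset_sum _ fun k _ => hterm k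
  -- T₂ : value below B₀
  have hKpos : (0:ℝ) < (K:ℝ) := by exact_mod_cast hK
  set ε := B₀ / (2 * K) with hεdef
  have hε : 0 < ε := by positivity
  set T₂ := max (tmax + 1) (Finset.univ.sup' hne (fun k => t k + S / R k ε) + 1) with hT₂def
  have hT₂mem : tmax < T₂ := lt_of_lt_of_le (by linarith) (le_max_left _ _)
  have hFT₂ : F T₂ < B₀ := by
    have hsum : F T₂ < ∑ _k : Fin K, ε := by
      apply Finset.sum_lt_sum_of_nonempty hne
      intro k _
      have hRε : 0 < R k ε := hRpos k ε hε
      have hT₂k : t k + S / R k ε + 1 ≤ T₂ := by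
        refine le_trans ?_ (le_max_right _ _)
        have := Finset.le_sup' (fun k => t k + S / R k ε) (Finset.mem_univ k)
        linarith
      have hTk : (0:ℝ) < T₂ - t k := by
        have : 0 < S / R k ε := div_pos hS hRε
        linarith
      have harg : S / (T₂ - t k) < R k ε := by
        rw [div_lt_iff₀ hTk]
        have h5 : S / R k ε < T₂ - t k := by linarith
        rw [div_lt_iff₀ hRε] at h5
        linarith
      have : bfun T₂ k < g k (R k ε) :=
        hgmono k (Set.mem_Ioi.mpr (hden T₂ hT₂mem k)) (Set.mem_Ioi.mpr hRε) harg
      rwa [hgleft k ε hε] at this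
    have : ∑ _k : Fin K, ε = B₀ / 2 := by
      rw [Finset.sum_const, Finset.card_univ, Fintype.card_fin, nsmul_eq_mul, hεdef]
      field_simp
    linarith
  -- T₁ : value above B₀
  set y₀ := R k₀ B₀ with hy₀def
  have hy₀ : 0 < y₀ := hRpos k₀ B₀ hB₀
  set T₁ := tmax + S / y₀ / 2 with hT₁def
  have hT₁mem : tmax < T₁ := by
    rw [hT₁def]
    have : 0 < S / y₀ / 2 := by positivity
    linarith
  have hFT₁ : B₀ < F T₁ := by
    have harg : y₀ < S / (T₁ - t k₀) := by
      have h1 : T₁ - t k₀ = S / y₀ / 2 := by rw [hT₁def, ← hk₀]; ring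
      have hy₀' : y₀ ≠ 0 := ne_of_gt hy₀
      have hS' : S ≠ 0 := ne_of_gt hS
      have h2 : S / (S / y₀ / 2) = 2 * y₀ := by
        field_simp
      rw [h1, h2]
      linarith
    have hterm : B₀ < bfun T₁ k₀ := by
      have := hgmono k₀ (Set.mem_Ioi.mpr hy₀) (Set.mem_Ioi.mpr (hden T₁ hT₁mem k₀)) harg
      rwa [hgleft k₀ B₀ hB₀] at this
    have hle : bfun T₁ k₀ ≤ F T₁ :=
      Finset.single_le_sum (fun k _ => le_of_lt (hbpos T₁ hT₁mem k)) (Finset.mem_univ k₀)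
    linarith
  have hT12 : T₁ < T₂ := by
    rcases lt_trichotomy T₁ T₂ with h | h | h
    · exact h
    · rw [h] at hFT₁; linarith
    · have := hFanti (Set.mem_Ioi.mpr hT₂mem) (Set.mem_Ioi.mpr hT₁mem) h
      linarith
  have hFcontIcc : ContinuousOn F (Set.Icc T₁ T₂) := fun x hx =>
    (hFcontAt x (lt_of_lt_of_le hT₁mem hx.1)).continuousWithinAt
  obtain ⟨T, hTmem, hFT⟩ := intermediate_value_Icc' (le_of_lt hT12) hFcontIcc
    ⟨le_of_lt hFT₂, le_of_lt hFT₁⟩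
  have hTU : tmax < T := lt_of_lt_of_le hT₁mem hTmem.1
  refine ⟨⟨T, bfun T⟩, ⟨fun k => lt_of_le_of_lt (htle k) hTU, fun k => hbpos T hTU k,
    fun k => hbeq T hTU k, hFT⟩, ?_⟩
  rintro ⟨T', b'⟩ ⟨h1, h2, h3, h4⟩
  simp only at h1 h2 h3 h4
  have hT'U : tmax < T' := by rw [htmaxdef, hk₀]; exact h1 k₀
  have hb' : ∀ k, b' k = bfun T' k := by
    intro k
    have hr : 0 < R k (b' k) := hRpos _ _ (h2 k)
    have hd : 0 < T' - t k := by have := h1 k; linarith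
    have h5 : S / R k (b' k) = T' - t k := by linarith [h3 k]
    rw [div_eq_iff (ne_of_gt hr)] at h5
    have hre : R k (b' k) = S / (T' - t k) := by
      rw [eq_div_iff (ne_of_gt hd), mul_comm]
      exact h5.symm
    have := hgleft k (b' k) (h2 k)
    rw [hre] at this
    exact this.symm
  have hFT' : F T' = B₀ := by
    rw [← h4]
    exact Finset.sum_congr rfl fun k _ => (hb' k).symm
  have hTT : T' = T := hFanti.injOn (Set.mem_Ioi.mpr hT'U) (Set.mem_Ioi.mpr hTU)
    (by rw [hFT', hFT])
  simp only [Prod.mk.injEq]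
  exact ⟨hTT, funext fun k => by rw [hb' k, hTT]⟩
end
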